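/- arXiv:2403.07591 — 4 statements merged into one kernel-verified Lean document; each statement's English description precedes it below -/
import Mathlib

section
/- Let (Ω, P) be a probability space and let M₁, M₂, f : Ω → ℝ be square-integrable random variables. Suppose Cov[M₁, f] ≠ 0, Cov[M₂, f] ≠ 0, Cov[M₁, M₂] ≠ (Cov[M₂, f] · Var[M₁]) / Cov[M₁, f], and Cov[M₁, M₂] ≠ (Cov[M₁, f] · Var[M₂]) / Cov[M₂, f]. Then there exist real numbers w₁, w₂ such that ρ(w₁·M₁ + w₂·M₂, f) > max(ρ(M₁, f), ρ(M₂, f)), where ρ denotes the Pearson correlation. -/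
/-!
Perturb the better of the two predictors, say `M₁`, in the direction of the other: the
correlation of `M₁ + t • M₂` with `f` is differentiable in `t`, with derivative at `t = 0`
proportional to `Cov[M₂, f] Var[M₁] - Cov[M₁, f] Cov[M₁, M₂]`. The hypotheses make this
nonzero, so `t = 0` is not a maximum, and some `t` strictly beats `ρ(M₁, f)`.
-/

open MeasureTheory

/-- Covariance of two real random variables. -/
noncomputable def cov {Ω : Type*} [MeasurableSpace Ω] (P : Measure Ω) (X Y : Ω → ℝ) : ℝ :=
  ∫ ω, (X ω - ∫ ω', X ω' ∂P) * (Y ω - ∫ ω', Y ω' ∂P) ∂P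

/-- Variance of a real random variable. -/
noncomputable def var {Ω : Type*} [MeasurableSpace Ω] (P : Measure Ω) (X : Ω → ℝ) : ℝ :=
  cov P X X

/-- Pearson correlation of two real random variables. -/
noncomputable def pearson {Ω : Type*} [MeasurableSpace Ω] (P : Measure Ω) (X Y : Ω → ℝ) : ℝ :=
  cov P X Y / Real.sqrt (var P X * var P Y)

open ProbabilityTheory Real

section Moments

variable {Ω : Type*} [MeasurableSpace Ω] {P : Measure Ω}

lemma cov_eq_covariance (X Y : Ω → ℝ) : cov P X Y = covariance X Y P := rfl

lemma cov_comm (X Y : Ω → ℝ) : cov P X Y = cov P Y X := covariance_comm X Y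

variable [IsFiniteMeasure P] {X Y Z : Ω → ℝ}

lemma cov_add_const_mul_left (hX : MemLp X 2 P) (hY : MemLp Y 2 P) (hZ : MemLp Z 2 P) (t : ℝ) :
    cov P (fun ω => X ω + t * Y ω) Z = cov P X Z + t * cov P Y Z := by
  simp only [cov_eq_covariance]
  rw [← covariance_const_mul_left t]
  exact covariance_add_left hX (hY.const_mul t) hZ

lemma var_add_const_mul (hX : MemLp X 2 P) (hY : MemLp Y 2 P) (t : ℝ) :
    var P (fun ω => X ω + t * Y ω) = var P X + 2 * t * cov P X Y + t ^ 2 * var P Y := by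
  have hXY : MemLp (fun ω => X ω + t * Y ω) 2 P := hX.add (hY.const_mul t)
  unfold var
  rw [cov_add_const_mul_left hX hY hXY, cov_comm X, cov_comm Y,
    cov_add_const_mul_left hX hY hX, cov_add_const_mul_left hX hY hY, cov_comm Y X]
  ring

lemma pearson_add_const_mul_left (hX : MemLp X 2 P) (hY : MemLp Y 2 P) (hZ : MemLp Z 2 P)
    (t : ℝ) :
    pearson P (fun ω => X ω + t * Y ω) Z =
      (cov P X Z + t * cov P Y Z) /
        √((var P X + 2 * t * cov P X Y + t ^ 2 * var P Y) * var P Z) := by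
  rw [pearson, cov_add_const_mul_left hX hY hZ, var_add_const_mul hX hY]

end Moments

lemma exists_lt_of_hasDerivAt_ne_zero {g : ℝ → ℝ} {g' x : ℝ} (hg : HasDerivAt g g' x)
    (hg' : g' ≠ 0) : ∃ y, g x < g y := by
  by_contra! hmax
  exact hg' (IsLocalMax.hasDerivAt_eq_zero (.of_forall hmax) hg)

lemma hasDerivAt_div_sqrt_quadratic {v₁ vf : ℝ} (hv₁ : 0 < v₁) (hvf : 0 < vf) (v₂ c₁ c₂ c : ℝ) :
    HasDerivAt (fun t => (c₁ + t * c₂) / √((v₁ + 2 * t * c + t ^ 2 * v₂) * vf))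
      ((c₂ * v₁ - c₁ * c) / (v₁ * √(v₁ * vf))) 0 := by
  have hpos : 0 < v₁ * vf := mul_pos hv₁ hvf
  have hN : HasDerivAt (fun t : ℝ => c₁ + t * c₂) c₂ 0 := by
    simpa using ((hasDerivAt_id' (0 : ℝ)).mul_const c₂).const_add c₁
  have hQ : HasDerivAt (fun t : ℝ => (v₁ + 2 * t * c + t ^ 2 * v₂) * vf) (2 * c * vf) 0 := by
    have := ((((hasDerivAt_id' (0 : ℝ)).const_mul (2 * c)).add
      ((hasDerivAt_pow 2 (0 : ℝ)).mul_const v₂)).const_add v₁).mul_const vf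
    refine (this.congr_deriv ?_).congr_of_eventuallyEq (.of_forall fun t => ?_)
    · simp
    · simp only [Pi.add_apply]; ring
  have hsqrt : √(v₁ * vf) ≠ 0 := (sqrt_pos.2 hpos).ne'
  refine (hN.div (hQ.sqrt (by simpa using hpos.ne')) (by simpa using hsqrt)).congr_deriv ?_
  simp only [mul_zero, zero_mul, add_zero, zero_pow two_ne_zero]
  field_simp
  rw [sq_sqrt hpos.le]
  ring

lemma exists_div_sqrt_quadratic_gt {v₁ vf c₁ c₂ c : ℝ} (hv₁ : 0 < v₁) (hvf : 0 < vf)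
    (hD : c₂ * v₁ ≠ c₁ * c) (v₂ : ℝ) :
    ∃ t : ℝ, c₁ / √(v₁ * vf) <
      (c₁ + t * c₂) / √((v₁ + 2 * t * c + t ^ 2 * v₂) * vf) := by
  have hderiv : (c₂ * v₁ - c₁ * c) / (v₁ * √(v₁ * vf)) ≠ 0 :=
    div_ne_zero (sub_ne_zero.2 hD) (mul_pos hv₁ (sqrt_pos.2 (mul_pos hv₁ hvf))).ne'
  simpa using exists_lt_of_hasDerivAt_ne_zero
    (hasDerivAt_div_sqrt_quadratic hv₁ hvf v₂ c₁ c₂ c) hderiv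

lemma exists_pearson_add_const_mul_gt {Ω : Type*} [MeasurableSpace Ω] {P : Measure Ω}
    [IsFiniteMeasure P] {X Y Z : Ω → ℝ} (hX : MemLp X 2 P) (hY : MemLp Y 2 P)
    (hZ : MemLp Z 2 P) (hvX : 0 < var P X) (hvZ : 0 < var P Z)
    (hD : cov P Y Z * var P X ≠ cov P X Z * cov P X Y) :
    ∃ t : ℝ, pearson P X Z < pearson P (fun ω => X ω + t * Y ω) Z := by
  simp only [pearson_add_const_mul_left hX hY hZ]
  exact exists_div_sqrt_quadratic_gt hvX hvZ hD _

theorem stmt_0 {Ω : Type*} [MeasurableSpace Ω] (P : Measure Ω) [IsProbabilityMeasure P]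
    (M₁ M₂ f : Ω → ℝ)
    (hM₁ : MemLp M₁ 2 P) (hM₂ : MemLp M₂ 2 P) (hf : MemLp f 2 P)
    (hv₁ : 0 < var P M₁) (hv₂ : 0 < var P M₂) (hvf : 0 < var P f)
    (hc₁ : cov P M₁ f ≠ 0) (hc₂ : cov P M₂ f ≠ 0)
    (h₁ : cov P M₁ M₂ ≠ cov P M₂ f * var P M₁ / cov P M₁ f)
    (h₂ : cov P M₁ M₂ ≠ cov P M₁ f * var P M₂ / cov P M₂ f) :
    ∃ w₁ w₂ : ℝ,
      pearson P (fun ω => w₁ * M₁ ω + w₂ * M₂ ω) f >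
        max (pearson P M₁ f) (pearson P M₂ f) := by
  rcases le_total (pearson P M₂ f) (pearson P M₁ f) with h | h
  · have hD : cov P M₂ f * var P M₁ ≠ cov P M₁ f * cov P M₁ M₂ := fun heq =>
      h₁ ((eq_div_iff hc₁).2 (by linarith))
    obtain ⟨t, ht⟩ := exists_pearson_add_const_mul_gt hM₁ hM₂ hf hv₁ hvf hD
    exact ⟨1, t, by simpa [max_eq_left h] using ht⟩
  · have hD : cov P M₁ f * var P M₂ ≠ cov P M₂ f * cov P M₂ M₁ := fun heq =>
      h₂ ((eq_div_iff hc₂).2 (by rw [cov_comm M₁]; linarith))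
    obtain ⟨t, ht⟩ := exists_pearson_add_const_mul_gt hM₂ hM₁ hf hv₂ hvf hD
    exact ⟨t, 1, by simpa [max_eq_right h, add_comm] using ht⟩
end

section
/- Let n and m be natural numbers with 1 ≤ m ≤ n. The average, over all m-element subsets S of {1, 2, …, n}, of the minimum element of S equals (n + 1)/(m + 1). Equivalently, (m + 1) · ∑_{S ⊆ {1,…,n}, |S| = m} (min S) = (n + 1) · C(n, m), where C(n, m) is the binomial coefficient and the sum ranges over all m-element subsets S of {1,…,n}. -/
/-!
Write `min S = #{k ∈ [1, n] | k ≤ min S}` and swap the order of summation: for each `k`, the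
`m`-subsets of `[1, n]` all of whose elements are at least `k` are the `m`-subsets of `[k, n]`,
so the sum of the minima is
`∑_{k=1}^{n} C(n + 1 - k, m) = ∑_{j=1}^{n} C(j, m) = C(n + 1, m + 1)`
by the hockey-stick identity, and `(m + 1) C(n + 1, m + 1) = (n + 1) C(n, m)`.
-/

open Finset

namespace Finset

lemma filter_powersetCard_Icc_forall_le {α : Type*} [Preorder α] [DecidableLE α]
    [LocallyFiniteOrder α] {a b c : α} (hac : a ≤ c) (m : ℕ) :
    {S ∈ (Icc a b).powersetCard m | ∀ x ∈ S, c ≤ x} = (Icc c b).powersetCard m := by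
  ext S
  simp only [mem_filter, mem_powersetCard, subset_iff, mem_Icc]
  constructor
  · rintro ⟨⟨hS, hcard⟩, hlow⟩
    exact ⟨fun x hx => ⟨hlow x hx, (hS hx).2⟩, hcard⟩
  · rintro ⟨hS, hcard⟩
    exact ⟨⟨fun x hx => ⟨hac.trans (hS hx).1, (hS hx).2⟩, hcard⟩, fun x hx => (hS hx).1⟩

lemma card_filter_Icc_forall_le_eq_min' {n : ℕ} {S : Finset ℕ} (hSn : S ⊆ Icc 1 n)
    (hS : S.Nonempty) : #{k ∈ Icc 1 n | ∀ x ∈ S, k ≤ x} = S.min' hS := by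
  have hmin := mem_Icc.1 (hSn (S.min'_mem hS))
  have : {k ∈ Icc 1 n | ∀ x ∈ S, k ≤ x} = Icc 1 (S.min' hS) := by
    ext k
    simp only [mem_filter, mem_Icc, ← le_min'_iff S hS]
    omega
  rw [this, Nat.card_Icc, Nat.add_sub_cancel]

lemma sum_Icc_reflect {M : Type*} [AddCommMonoid M] (f : ℕ → M) (n : ℕ) :
    ∑ k ∈ Icc 1 n, f (n + 1 - k) = ∑ k ∈ Icc 1 n, f k := by
  simpa [Ico_add_one_right_eq_Icc] using sum_Ico_reflect f 1 (Nat.le_succ (n + 1))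

end Finset

namespace Nat

lemma sum_Icc_one_choose {m : ℕ} (hm : 1 ≤ m) (n : ℕ) :
    ∑ j ∈ Icc 1 n, j.choose m = (n + 1).choose (m + 1) := by
  rw [← sum_Icc_choose]
  refine (sum_subset (Icc_subset_Icc_left hm) fun j hj hjm => ?_).symm
  exact choose_eq_zero_of_lt (by simp_all)

end Nat

lemma sum_card_filter_forall_le_powersetCard_Icc {m : ℕ} (hm : 1 ≤ m) (n : ℕ) :
    ∑ S ∈ (Icc 1 n).powersetCard m, #{k ∈ Icc 1 n | ∀ x ∈ S, k ≤ x} =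
      (n + 1).choose (m + 1) :=
  calc _ = ∑ k ∈ Icc 1 n, #{S ∈ (Icc 1 n).powersetCard m | ∀ x ∈ S, k ≤ x} :=
        sum_card_bipartiteAbove_eq_sum_card_bipartiteBelow (fun S k => ∀ x ∈ S, k ≤ x)
    _ = ∑ k ∈ Icc 1 n, (n + 1 - k).choose m := sum_congr rfl fun k hk => by
        rw [filter_powersetCard_Icc_forall_le (mem_Icc.1 hk).1, card_powersetCard, Nat.card_Icc]
    _ = ∑ j ∈ Icc 1 n, j.choose m := sum_Icc_reflect (·.choose m) n
    _ = (n + 1).choose (m + 1) := Nat.sum_Icc_one_choose hm n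

theorem stmt_1 (n m : ℕ) (hm : 1 ≤ m) :
    (m + 1) *
        ∑ S ∈ ((Finset.Icc 1 n).powersetCard m).attach,
          S.1.min' (Finset.card_pos.mp (by
            have h := (Finset.mem_powersetCard.mp S.2).2
            omega)) =
      (n + 1) * Nat.choose n m := by
  rw [Nat.add_one_mul_choose_eq, ← sum_card_filter_forall_le_powersetCard_Icc hm, mul_comm,
    ← sum_attach ((Icc 1 n).powersetCard m) fun S => #{k ∈ Icc 1 n | ∀ x ∈ S, k ≤ x}]
  congr 1
  exact sum_congr rfl fun S _ =>
    (card_filter_Icc_forall_le_eq_min' (mem_powersetCard.1 S.2).1 _).symm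
end

section
/- Let c₁, c₂, c₁₂, v₁, v₂, v_f be real numbers with v₁ > 0, v₂ > 0, v_f > 0 and v₁·v₂ > c₁₂² (so that a²·v₁ + 2a·c₁₂ + v₂ > 0 for all real a). Define h : ℝ → ℝ by h(a) = (a·c₁ + c₂) / √((a²·v₁ + 2a·c₁₂ + v₂) · v_f). If c₁ ≠ 0, c₂ ≠ 0, c₂·c₁₂ ≠ c₁·v₂, and c₁·c₁₂ ≠ c₂·v₁, then the derivative of h vanishes at a* = (c₂·c₁₂ − c₁·v₂) / (c₁·c₁₂ − c₂·v₁), i.e., h'(a*) = 0. -/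
/-!
At a critical point of `f / √g` with `g > 0` one has `2 f' g = f g'`. For the numerator
`a c₁ + c₂` and the quadratic `q(a) = a² v₁ + 2 a c₁₂ + v₂` (scaled by `v_f`) this condition
reads `c₁ q(a) = (a c₁ + c₂)(a v₁ + c₁₂)`, in which the quadratic terms cancel: it becomes the
linear equation `a (c₁ c₁₂ - c₂ v₁) = c₂ c₁₂ - c₁ v₂`, whose root is `a*`. Non-colinearity makes
`q` positive, so `h` is differentiable there.
-/

open Real

theorem HasDerivAt.div_sqrt_eq_zero {f g : ℝ → ℝ} {f' g' x : ℝ} (hf : HasDerivAt f f' x)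
    (hg : HasDerivAt g g' x) (hgx : 0 < g x) (hcrit : 2 * f' * g x = f x * g') :
    HasDerivAt (fun y => f y / √(g y)) 0 x := by
  have hs : 0 < √(g x) := sqrt_pos.2 hgx
  refine (hf.div (hg.sqrt hgx.ne') hs.ne').congr_deriv ?_
  rw [div_eq_zero_iff, sub_eq_zero]
  left
  field_simp
  rw [sq_sqrt hgx.le]
  linear_combination hcrit

theorem quadratic_pos_of_sq_lt_mul {v₁ v₂ c₁₂ : ℝ} (hv₁ : 0 < v₁) (hnc : c₁₂ ^ 2 < v₁ * v₂)
    (a : ℝ) : 0 < a ^ 2 * v₁ + 2 * a * c₁₂ + v₂ := by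
  nlinarith [sq_nonneg (a * v₁ + c₁₂)]

theorem stmt_5_general (c₁ c₂ c₁₂ v₁ v₂ vf : ℝ)
    (hv₁ : 0 < v₁) (hvf : 0 < vf) (hnc : c₁₂ ^ 2 < v₁ * v₂)
    (h₂ : c₁ * c₁₂ ≠ c₂ * v₁) :
    deriv (fun a : ℝ => (a * c₁ + c₂) / Real.sqrt ((a ^ 2 * v₁ + 2 * a * c₁₂ + v₂) * vf))
        ((c₂ * c₁₂ - c₁ * v₂) / (c₁ * c₁₂ - c₂ * v₁)) = 0 := by
  set a := (c₂ * c₁₂ - c₁ * v₂) / (c₁ * c₁₂ - c₂ * v₁)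
  have ha : a * (c₁ * c₁₂ - c₂ * v₁) = c₂ * c₁₂ - c₁ * v₂ :=
    div_mul_cancel₀ _ (sub_ne_zero.2 h₂)
  have hnum : HasDerivAt (fun a : ℝ => a * c₁ + c₂) c₁ a := by
    simpa using ((hasDerivAt_id a).mul_const c₁).add_const c₂
  have hden : HasDerivAt (fun a : ℝ => (a ^ 2 * v₁ + 2 * a * c₁₂ + v₂) * vf)
      ((2 * a * v₁ + 2 * c₁₂) * vf) a := by
    refine ((((hasDerivAt_pow 2 a).mul_const v₁).add
      (((hasDerivAt_id a).const_mul 2).mul_const c₁₂)).add_const v₂).mul_const vf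
      |>.congr_deriv ?_
    norm_num
  refine (hnum.div_sqrt_eq_zero hden
    (mul_pos (quadratic_pos_of_sq_lt_mul hv₁ hnc a) hvf) ?_).deriv
  linear_combination (2 * vf) * ha

theorem stmt_5 (c₁ c₂ c₁₂ v₁ v₂ vf : ℝ)
    (hv₁ : 0 < v₁) (hv₂ : 0 < v₂) (hvf : 0 < vf) (hnc : c₁₂ ^ 2 < v₁ * v₂)
    (hc₁ : c₁ ≠ 0) (hc₂ : c₂ ≠ 0)
    (h₁ : c₂ * c₁₂ ≠ c₁ * v₂) (h₂ : c₁ * c₁₂ ≠ c₂ * v₁) :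
    deriv (fun a : ℝ => (a * c₁ + c₂) / Real.sqrt ((a ^ 2 * v₁ + 2 * a * c₁₂ + v₂) * vf))
        ((c₂ * c₁₂ - c₁ * v₂) / (c₁ * c₁₂ - c₂ * v₁)) = 0 :=
  stmt_5_general c₁ c₂ c₁₂ v₁ v₂ vf hv₁ hvf hnc h₂
end

section
/- Let c₁, c₂, c₁₂, v₁, v₂, v_f be real numbers with v₁ > 0, v₂ > 0, v_f > 0 and v₁·v₂ > c₁₂² (so that a²·v₁ + 2a·c₁₂ + v₂ > 0 for all real a). Define h : ℝ → ℝ by h(a) = (a·c₁ + c₂) / √((a²·v₁ + 2a·c₁₂ + v₂) · v_f). If c₁ ≠ 0, c₂ ≠ 0, c₂·c₁₂ ≠ c₁·v₂, and c₁·c₁₂ ≠ c₂·v₁, then a* = (c₂·c₁₂ − c₁·v₂) / (c₁·c₁₂ − c₂·v₁) is a global extremum of h: either h(a) ≤ h(a*) for all real a, or h(a) ≥ h(a*) for all real a. -/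
/-!
Write `Q(a) = a² v₁ + 2 a c₁₂ + v₂` and `N = c₂² v₁ - 2 c₁ c₂ c₁₂ + c₁² v₂`. The Lagrange-type identity
`(a c₁ + c₂)² (v₁ v₂ - c₁₂²) + (a (c₁ c₁₂ - c₂ v₁) + (c₁ v₂ - c₂ c₁₂))² = N · Q(a)`
(Cauchy–Schwarz for the Gram matrix of `M₁, M₂`) shows `(a c₁ + c₂)² / Q(a) ≤ N / (v₁ v₂ - c₁₂²)`,
with equality exactly where the second square vanishes, i.e. at `a*`. As `√(Q(a) v_f) = √Q(a) √v_f`,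
`|h|` is therefore maximal at `a*`, and `a*` is a maximum of `h` or a minimum of `h` according to
the sign of `h(a*)`.
-/

theorem forall_le_or_forall_ge_of_abs_le {α : Type*} {f : α → ℝ} {b : α}
    (h : ∀ a, |f a| ≤ |f b|) : (∀ a, f a ≤ f b) ∨ (∀ a, f a ≥ f b) := by
  rcases le_total 0 (f b) with hb | hb
  · exact Or.inl fun a => (le_abs_self _).trans ((h a).trans (abs_of_nonneg hb).le)
  · exact Or.inr fun a => by linarith [neg_abs_le (f a), h a, abs_of_nonpos hb]

theorem sq_mul_det_add_sq_eq (c₁ c₂ c₁₂ v₁ v₂ a : ℝ) :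
    (a * c₁ + c₂) ^ 2 * (v₁ * v₂ - c₁₂ ^ 2) +
        (a * (c₁ * c₁₂ - c₂ * v₁) + (c₁ * v₂ - c₂ * c₁₂)) ^ 2 =
      (c₂ ^ 2 * v₁ - 2 * c₁ * c₂ * c₁₂ + c₁ ^ 2 * v₂) * (a ^ 2 * v₁ + 2 * a * c₁₂ + v₂) := by
  ring

section QuadraticForm

variable {c₁ c₂ c₁₂ v₁ v₂ : ℝ}

theorem quadForm_pos (hv₁ : 0 < v₁) (hnc : c₁₂ ^ 2 < v₁ * v₂) (a : ℝ) :
    0 < a ^ 2 * v₁ + 2 * a * c₁₂ + v₂ := by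
  nlinarith [sq_nonneg (a * v₁ + c₁₂)]

theorem sq_div_quadForm_le (hv₁ : 0 < v₁) (hnc : c₁₂ ^ 2 < v₁ * v₂) (a : ℝ) :
    (a * c₁ + c₂) ^ 2 / (a ^ 2 * v₁ + 2 * a * c₁₂ + v₂) ≤
      (c₂ ^ 2 * v₁ - 2 * c₁ * c₂ * c₁₂ + c₁ ^ 2 * v₂) / (v₁ * v₂ - c₁₂ ^ 2) := by
  rw [div_le_div_iff₀ (quadForm_pos hv₁ hnc a) (by linarith)]
  linarith [sq_mul_det_add_sq_eq c₁ c₂ c₁₂ v₁ v₂ a,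
    sq_nonneg (a * (c₁ * c₁₂ - c₂ * v₁) + (c₁ * v₂ - c₂ * c₁₂))]

theorem sq_div_quadForm_eq (hv₁ : 0 < v₁) (hnc : c₁₂ ^ 2 < v₁ * v₂) {b : ℝ}
    (hb : b * (c₁ * c₁₂ - c₂ * v₁) + (c₁ * v₂ - c₂ * c₁₂) = 0) :
    (b * c₁ + c₂) ^ 2 / (b ^ 2 * v₁ + 2 * b * c₁₂ + v₂) =
      (c₂ ^ 2 * v₁ - 2 * c₁ * c₂ * c₁₂ + c₁ ^ 2 * v₂) / (v₁ * v₂ - c₁₂ ^ 2) := by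
  rw [div_eq_div_iff (quadForm_pos hv₁ hnc b).ne' (by linarith)]
  linear_combination sq_mul_det_add_sq_eq c₁ c₂ c₁₂ v₁ v₂ b
    - (b * (c₁ * c₁₂ - c₂ * v₁) + (c₁ * v₂ - c₂ * c₁₂)) * hb

theorem abs_div_sqrt_quadForm_le (hv₁ : 0 < v₁) (hnc : c₁₂ ^ 2 < v₁ * v₂) {b : ℝ}
    (hb : b * (c₁ * c₁₂ - c₂ * v₁) + (c₁ * v₂ - c₂ * c₁₂) = 0) (a : ℝ) :
    |(a * c₁ + c₂) / √(a ^ 2 * v₁ + 2 * a * c₁₂ + v₂)| ≤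
      |(b * c₁ + c₂) / √(b ^ 2 * v₁ + 2 * b * c₁₂ + v₂)| := by
  simp only [abs_div, abs_of_nonneg (Real.sqrt_nonneg _), ← Real.sqrt_sq_eq_abs,
    ← Real.sqrt_div (sq_nonneg _)]
  exact Real.sqrt_le_sqrt <|
    (sq_div_quadForm_le hv₁ hnc a).trans (sq_div_quadForm_eq hv₁ hnc hb).ge

end QuadraticForm

theorem stmt_6_general (c₁ c₂ c₁₂ v₁ v₂ vf : ℝ)
    (hv₁ : 0 < v₁) (hnc : c₁₂ ^ 2 < v₁ * v₂)
    (h₂ : c₁ * c₁₂ ≠ c₂ * v₁) :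
    (∀ a : ℝ,
        (a * c₁ + c₂) / Real.sqrt ((a ^ 2 * v₁ + 2 * a * c₁₂ + v₂) * vf) ≤
          (((c₂ * c₁₂ - c₁ * v₂) / (c₁ * c₁₂ - c₂ * v₁)) * c₁ + c₂) /
            Real.sqrt ((((c₂ * c₁₂ - c₁ * v₂) / (c₁ * c₁₂ - c₂ * v₁)) ^ 2 * v₁ +
              2 * ((c₂ * c₁₂ - c₁ * v₂) / (c₁ * c₁₂ - c₂ * v₁)) * c₁₂ + v₂) * vf)) ∨
    (∀ a : ℝ,
        (a * c₁ + c₂) / Real.sqrt ((a ^ 2 * v₁ + 2 * a * c₁₂ + v₂) * vf) ≥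
          (((c₂ * c₁₂ - c₁ * v₂) / (c₁ * c₁₂ - c₂ * v₁)) * c₁ + c₂) /
            Real.sqrt ((((c₂ * c₁₂ - c₁ * v₂) / (c₁ * c₁₂ - c₂ * v₁)) ^ 2 * v₁ +
              2 * ((c₂ * c₁₂ - c₁ * v₂) / (c₁ * c₁₂ - c₂ * v₁)) * c₁₂ + v₂) * vf)) := by
  set b := (c₂ * c₁₂ - c₁ * v₂) / (c₁ * c₁₂ - c₂ * v₁)
  have hb : b * (c₁ * c₁₂ - c₂ * v₁) + (c₁ * v₂ - c₂ * c₁₂) = 0 := by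
    rw [div_mul_cancel₀ _ (sub_ne_zero.2 h₂)]
    ring
  refine forall_le_or_forall_ge_of_abs_le fun a => ?_
  simp only [Real.sqrt_mul (quadForm_pos hv₁ hnc _).le, ← div_div, abs_div (_ / _),
    abs_of_nonneg (Real.sqrt_nonneg vf)]
  exact div_le_div_of_nonneg_right (abs_div_sqrt_quadForm_le hv₁ hnc hb a) (Real.sqrt_nonneg vf)

theorem stmt_6 (c₁ c₂ c₁₂ v₁ v₂ vf : ℝ)
    (hv₁ : 0 < v₁) (hv₂ : 0 < v₂) (hvf : 0 < vf) (hnc : c₁₂ ^ 2 < v₁ * v₂)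
    (hc₁ : c₁ ≠ 0) (hc₂ : c₂ ≠ 0)
    (h₁ : c₂ * c₁₂ ≠ c₁ * v₂) (h₂ : c₁ * c₁₂ ≠ c₂ * v₁) :
    (∀ a : ℝ,
        (a * c₁ + c₂) / Real.sqrt ((a ^ 2 * v₁ + 2 * a * c₁₂ + v₂) * vf) ≤
          (((c₂ * c₁₂ - c₁ * v₂) / (c₁ * c₁₂ - c₂ * v₁)) * c₁ + c₂) /
            Real.sqrt ((((c₂ * c₁₂ - c₁ * v₂) / (c₁ * c₁₂ - c₂ * v₁)) ^ 2 * v₁ +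
              2 * ((c₂ * c₁₂ - c₁ * v₂) / (c₁ * c₁₂ - c₂ * v₁)) * c₁₂ + v₂) * vf)) ∨
    (∀ a : ℝ,
        (a * c₁ + c₂) / Real.sqrt ((a ^ 2 * v₁ + 2 * a * c₁₂ + v₂) * vf) ≥
          (((c₂ * c₁₂ - c₁ * v₂) / (c₁ * c₁₂ - c₂ * v₁)) * c₁ + c₂) /
            Real.sqrt ((((c₂ * c₁₂ - c₁ * v₂) / (c₁ * c₁₂ - c₂ * v₁)) ^ 2 * v₁ +
              2 * ((c₂ * c₁₂ - c₁ * v₂) / (c₁ * c₁₂ - c₂ * v₁)) * c₁₂ + v₂) * vf)) :=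
  stmt_6_general c₁ c₂ c₁₂ v₁ v₂ vf hv₁ hnc h₂
end
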